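/- Let A be a k-pebble transducer with equality tests, and let B be the basic k-pebble transducer constructed from A via the consistency-pair construction. If A is reverse-deterministic, then B is reverse-deterministic. -/
import Mathlib


/-!
Common framework: pebble transducers with equality tests
(following "Reversible Pebble Transducers").
-/

namespace RevPeb

/-- Atomic tests: `headPeb i` is `(h = p_i)`, `pebPeb i j` is `(p_i = p_j)`
(indices are 0-based, pebble `i+1` of the paper). -/
inductive Atom (k : ℕ) : Type where
  | headPeb : Fin k → Atom k
  | pebPeb : Fin k → Fin k → Atom k

/-- Pebble operations (0-based: `drop i`/`lift i` refer to pebble `i+1` of the paper). -/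
inductive PebOp (k : ℕ) : Type where
  | nop : PebOp k
  | drop : Fin k → PebOp k
  | lift : Fin k → PebOp k

/-- A test is a conjunction of literals: an atom together with a polarity. -/
abbrev Test (k : ℕ) : Type := List (Atom k × Bool)

/-- A transition `(q, a, φ, op, q')`; `letter = none` encodes the endmarker `#`. -/
structure PTrans (Q Sg : Type*) (k : ℕ) where
  src : Q
  letter : Option Sg
  test : Test k
  op : PebOp k
  tgt : Q

/-- A `k`-pebble transducer with equality tests (data part).
`dir q` is the polarity of state `q` (which part of `Q_{+1} ⊎ Q_0 ⊎ Q_{-1}` it lies in). -/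
structure PT (Q Sg Gm : Type*) (k : ℕ) where
  dir : Q → SignType
  qinit : Q
  qfin : Q
  δ : Set (PTrans Q Sg k)
  μ : PTrans Q Sg k → List Gm

variable {Q Sg Gm : Type*} {k : ℕ}

/-- Well-formedness: `q_i, q_f ∈ Q_0`, `q_i ≠ q_f`, no transition leaves `q_f`
nor enters `q_i`, and the transition set is finite. -/
def PT.WF (T : PT Q Sg Gm k) : Prop :=
  T.dir T.qinit = 0 ∧ T.dir T.qfin = 0 ∧ T.qinit ≠ T.qfin ∧
  (∀ t ∈ T.δ, t.src ≠ T.qfin ∧ t.tgt ≠ T.qinit) ∧ T.δ.Finite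

/-- Letter of the circular word `#u` at position `h ∈ {0,…,|u|}`;
`none` is the endmarker `#` (at position 0). -/
def letterAt (u : List Sg) (h : ℕ) : Option Sg :=
  if h = 0 then none else u[h-1]?

/-- Satisfaction of an atomic test by a pebble stack and head position. -/
def atomSat (peb : List ℕ) (h : ℕ) : Atom k → Prop
  | .headPeb i => (i : ℕ) < peb.length ∧ peb.getD i 0 = h
  | .pebPeb i j => (i : ℕ) < peb.length ∧ (j : ℕ) < peb.length ∧ peb.getD i 0 = peb.getD j 0

/-- Satisfaction of a test (conjunction of literals). -/
def testSat (peb : List ℕ) (h : ℕ) (φ : Test k) : Prop :=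
  ∀ l ∈ φ, (atomSat peb h l.1 ↔ l.2 = true)

/-- Executability of a pebble operation: `drop i` (pebble `i+1` of the paper) needs
`|peb| = i`, `lift i` needs `|peb| = i+1` and the top pebble at the head. -/
def opEnabled (peb : List ℕ) (h : ℕ) : PebOp k → Prop
  | .nop => True
  | .drop n => peb.length = (n : ℕ)
  | .lift n => peb.length = (n : ℕ) + 1 ∧ peb.getD (n : ℕ) 0 = h

/-- Effect of a pebble operation on the pebble stack. -/
def opApply (peb : List ℕ) (h : ℕ) : PebOp k → List ℕ
  | .nop => peb
  | .drop _ => peb ++ [h]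
  | .lift _ => peb.dropLast

/-- Head movement on the circular word `#u` (`len = |u|`, positions mod `len+1`). -/
def nextHead (len h : ℕ) : SignType → ℕ
  | .pos => (h + 1) % (len + 1)
  | .zero => h
  | .neg => (h + len) % (len + 1)

/-- A configuration `(q, peb, h)`. -/
structure Config (Q : Type*) where
  q : Q
  peb : List ℕ
  h : ℕ

/-- One step of the transducer on input `u` using transition `t`. -/
def PT.StepT (T : PT Q Sg Gm k) (u : List Sg) (t : PTrans Q Sg k) (C C' : Config Q) : Prop :=
  t ∈ T.δ ∧ C.q = t.src ∧ C.h ≤ u.length ∧ C.peb.length ≤ k ∧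
  letterAt u C.h = t.letter ∧
  testSat C.peb C.h t.test ∧ opEnabled C.peb C.h t.op ∧
  C'.q = t.tgt ∧ C'.peb = opApply C.peb C.h t.op ∧
  C'.h = nextHead u.length C.h (T.dir t.tgt)

/-- Runs, accumulating the produced output word. -/
inductive PT.Run (T : PT Q Sg Gm k) (u : List Sg) :
    Config Q → Config Q → List Gm → Prop where
  | refl (C : Config Q) : PT.Run T u C C []
  | step {C C' C'' : Config Q} (t : PTrans Q Sg k) {v : List Gm} :
      T.StepT u t C C' → PT.Run T u C' C'' v → PT.Run T u C C'' (T.μ t ++ v)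

/-- Semantics: pairs `(u,v)` such that some accepting run on `#u` outputs `v`. -/
def PT.Sem (T : PT Q Sg Gm k) : Set (List Sg × List Gm) :=
  {p | T.Run p.1 ⟨T.qinit, [], 0⟩ ⟨T.qfin, [], 0⟩ p.2}

/-- `t` is enabled at configuration `C` (on input `u`). -/
def PT.Enabled (T : PT Q Sg Gm k) (u : List Sg) (t : PTrans Q Sg k) (C : Config Q) : Prop :=
  ∃ C', T.StepT u t C C'

/-- `t` is reverse-enabled at configuration `C'` (on input `u`). -/
def PT.RevEnabled (T : PT Q Sg Gm k) (u : List Sg) (t : PTrans Q Sg k) (C' : Config Q) : Prop :=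
  ∃ C, T.StepT u t C C'

/-- Determinism: two transitions simultaneously enabled at a common configuration coincide. -/
def PT.Deterministic (T : PT Q Sg Gm k) : Prop :=
  ∀ (u : List Sg) (t₁ t₂ : PTrans Q Sg k) (C : Config Q),
    T.Enabled u t₁ C → T.Enabled u t₂ C → t₁ = t₂

/-- Reverse-determinism. -/
def PT.RevDeterministic (T : PT Q Sg Gm k) : Prop :=
  ∀ (u : List Sg) (t₁ t₂ : PTrans Q Sg k) (C' : Config Q),
    T.RevEnabled u t₁ C' → T.RevEnabled u t₂ C' → t₁ = t₂

/-- Reversible = deterministic and reverse-deterministic. -/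
def PT.Reversible (T : PT Q Sg Gm k) : Prop := T.Deterministic ∧ T.RevDeterministic

/-- A basic pebble transducer uses no pebble-pebble equality atoms. -/
def PT.Basic (T : PT Q Sg Gm k) : Prop :=
  ∀ t ∈ T.δ, ∀ l ∈ t.test, ∀ i j : Fin k, l.1 ≠ Atom.pebPeb i j

/-- `T` computes the partial function `f` (encoded with `Option`): `⟦T⟧` is the graph of `f`. -/
def PT.Computes (T : PT Q Sg Gm k) (f : List Sg → Option (List Gm)) : Prop :=
  ∀ u v, (u, v) ∈ T.Sem ↔ f u = some v

end RevPeb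

namespace RevPeb

/-- `Φ₁(peb)`: the `k×k` boolean matrix with `α i j = 1` iff pebbles `i` and `j` are both
dropped and lie on the same position (0-based indices). -/
def Phi1 (k : ℕ) (peb : List ℕ) (i j : Fin k) : Bool :=
  decide ((i : ℕ) < peb.length ∧ (j : ℕ) < peb.length ∧ peb.getD (i : ℕ) 0 = peb.getD (j : ℕ) 0)

/-- `Φ₂(h, peb)`: the bit vector with `b i = 1` iff pebble `i` is dropped on the head
position `h`. -/
def Phi2 (k : ℕ) (h : ℕ) (peb : List ℕ) (i : Fin k) : Bool :=
  decide ((i : ℕ) < peb.length ∧ peb.getD (i : ℕ) 0 = h)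

/-- Basic consistency of a pair `(α, b)`: invariants I1–I5. -/
def BasicConsistent {k : ℕ} (α : Fin k → Fin k → Bool) (b : Fin k → Bool) : Prop :=
  -- (I1) symmetry and transitivity
  (∀ i j : Fin k, α i j = true → α j i = true) ∧
  (∀ i j m : Fin k, α i j = true → α j m = true → α i m = true) ∧
  -- (I2)
  (∀ i : Fin k, b i = true → α i i = true) ∧
  -- (I3)
  (∀ i j : Fin k, b i = true → b j = true → α i j = true) ∧
  -- (I4)
  (∀ i j : Fin k, α i j = true → α i i = true ∧ α j j = true ∧ b i = b j) ∧
  -- (I5)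
  (∀ i j : Fin k, i < j → α j j = true → α i i = true)

end RevPeb

namespace RevPeb

/-- Diagonal entry of `α` at a (possibly out-of-range) natural index; out-of-range is
`false`. -/
def matDiag {k : ℕ} (α : Fin k → Fin k → Bool) (i : ℕ) : Bool :=
  if h : i < k then α ⟨i, h⟩ ⟨i, h⟩ else false

/-- Satisfaction of an atomic test by an abstract pair `(α, b)`. -/
def atomSatAbs {k : ℕ} (α : Fin k → Fin k → Bool) (b : Fin k → Bool) : Atom k → Prop
  | .headPeb i => b i = true
  | .pebPeb i j => α i j = true

/-- Satisfaction of a test by an abstract pair `(α, b)`. -/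
def testSatAbs {k : ℕ} (α : Fin k → Fin k → Bool) (b : Fin k → Bool) (φ : Test k) : Prop :=
  ∀ l ∈ φ, (atomSatAbs α b l.1 ↔ l.2 = true)

/-- Abstract executability of a pebble operation on `(α, b)` (0-based indices:
`drop n`/`lift n` refer to pebble `n+1` of the paper). -/
def opEnabledAbs {k : ℕ} (α : Fin k → Fin k → Bool) (b : Fin k → Bool) : PebOp k → Prop
  | .nop => True
  | .drop n => α n n = false ∧ ((n : ℕ) = 0 ∨ matDiag α ((n : ℕ) - 1) = true)
  | .lift n => b n = true ∧ matDiag α ((n : ℕ) + 1) = false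

/-- Abstract effect of a pebble operation on the matrix `α` (given the bit vector `b`). -/
def opApplyAbs {k : ℕ} (α : Fin k → Fin k → Bool) (b : Fin k → Bool) :
    PebOp k → (Fin k → Fin k → Bool)
  | .nop => α
  | .drop n => fun i j =>
      if i < n ∧ j < n then α i j
      else if i = n ∧ j = n then true
      else if i < n ∧ j = n then b i
      else if i = n ∧ j < n then b j
      else false
  | .lift n => fun i j => if i < n ∧ j < n then α i j else false

end RevPeb

namespace RevPeb

/-- The full test over the head encoded by a bit vector `b`:
`⋀_{i: b i}(h=p_i) ∧ ⋀_{i: ¬b i}¬(h=p_i)`. -/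
def bitTest {k : ℕ} (b : Fin k → Bool) : Test k :=
  (List.finRange k).map (fun i => (Atom.headPeb i, b i))

/-- The transition of the consistency-pair construction generated by a transition `t`
and a pair `(α, b)`. -/
def cpTrans {Q Sg : Type*} {k : ℕ} (t : PTrans Q Sg k)
    (α : Fin k → Fin k → Bool) (b : Fin k → Bool) :
    PTrans (Q × (Fin k → Fin k → Bool)) Sg k :=
  ⟨(t.src, α), t.letter, bitTest b, t.op, (t.tgt, opApplyAbs α b t.op)⟩

/-- The pair `(α, b)` is admissible for the transition `t`: it is basic-consistent and
abstractly satisfies the test and the operation of `t`. -/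
def cpOK {Q Sg : Type*} {k : ℕ} (t : PTrans Q Sg k)
    (α : Fin k → Fin k → Bool) (b : Fin k → Bool) : Prop :=
  BasicConsistent α b ∧ testSatAbs α b t.test ∧ opEnabledAbs α b t.op

/-- The consistency-pair construction: the basic `k`-pebble transducer `B` built from a
`k`-pebble transducer with equality tests `A`.  States are pairs of a state of `A` and a
`k×k` boolean matrix; for each transition `t` of `A` and each admissible pair `(α,b)`,
`B` has the transition `((t.src,α), a, b, op, (t.tgt, op(α,b)))` with the same output. -/
noncomputable def consistencyPair {Q Sg Gm : Type*} {k : ℕ} (A : PT Q Sg Gm k) :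
    PT (Q × (Fin k → Fin k → Bool)) Sg Gm k where
  dir := fun p => A.dir p.1
  qinit := (A.qinit, fun _ _ => false)
  qfin := (A.qfin, fun _ _ => false)
  δ := {t' | ∃ t ∈ A.δ, ∃ α b, cpOK t α b ∧ t' = cpTrans t α b}
  μ := fun t' => by
    classical
    exact if h : ∃ t, t ∈ A.δ ∧ ∃ α b, cpOK t α b ∧ t' = cpTrans t α b
      then A.μ h.choose else []

end RevPeb

namespace RevPeb

section Helpers

variable {k : ℕ}

/-! ### Arithmetic of the circular head movement -/

lemma nextHead_le (len h : ℕ) (d : SignType) (hh : h ≤ len) : nextHead len h d ≤ len := by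
  cases d <;> simp only [nextHead] <;>
    first
      | exact hh
      | exact Nat.lt_succ_iff.mp (Nat.mod_lt _ (by omega))

lemma nextHead_inj {len h₁ h₂ : ℕ} (d : SignType) (h1 : h₁ ≤ len) (h2 : h₂ ≤ len)
    (he : nextHead len h₁ d = nextHead len h₂ d) : h₁ = h₂ := by
  have key : ∀ h ≤ len, ∀ d : SignType, nextHead len h d =
      (match d with
        | .pos => if h = len then 0 else h + 1
        | .zero => h
        | .neg => if h = 0 then len else h - 1) := by
    intro h hh d
    cases d
    · rfl
    · show (h + len) % (len + 1) = _
      by_cases h0 : h = 0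
      · subst h0; simp [Nat.mod_eq_of_lt (by omega : len < len + 1)]
      · have : h + len = (h - 1) + (len + 1) := by omega
        rw [this, Nat.add_mod_right, Nat.mod_eq_of_lt (by omega)]
        simp [h0]
    · show (h + 1) % (len + 1) = _
      by_cases h0 : h = len
      · subst h0; simp
      · rw [Nat.mod_eq_of_lt (by omega)]; simp [h0]
  rw [key h₁ h1 d, key h₂ h2 d] at he
  cases d
  · exact he
  · simp only at he; split_ifs at he <;> omega
  · simp only at he; split_ifs at he <;> omega

/-! ### The bit-vector test -/

lemma testSat_bitTest {peb : List ℕ} {h : ℕ} {b : Fin k → Bool} :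
    testSat peb h (bitTest b) ↔
      ∀ i : Fin k, (((i : ℕ) < peb.length ∧ peb.getD (i : ℕ) 0 = h) ↔ b i = true) := by
  constructor
  · intro hs i
    have := hs (Atom.headPeb i, b i) (by simp [bitTest])
    simpa [atomSat] using this
  · intro hs l hl
    simp only [bitTest, List.mem_map, List.mem_finRange] at hl
    obtain ⟨i, _, rfl⟩ := hl
    simpa [atomSat] using hs i

lemma eq_decide {P : Prop} [Decidable P] {b : Bool} (h : P ↔ b = true) : b = decide P := by
  cases b <;> simp_all

/-! ### Total matrix access, level, representatives -/

/-- entry of `α` at natural indices, out-of-range gives `false`. -/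
def matAt (α : Fin k → Fin k → Bool) (i j : ℕ) : Bool :=
  if h : i < k ∧ j < k then α ⟨i, h.1⟩ ⟨j, h.2⟩ else false

lemma matAt_fin (α : Fin k → Fin k → Bool) (i j : Fin k) :
    matAt α (i : ℕ) (j : ℕ) = α i j := by
  simp [matAt]

lemma matDiag_fin (α : Fin k → Fin k → Bool) (i : Fin k) :
    matDiag α (i : ℕ) = α i i := by
  simp [matDiag]

lemma exists_matDiag_false (α : Fin k → Fin k → Bool) : ∃ i, matDiag α i = false :=
  ⟨k, by simp [matDiag]⟩

/-- number of leading `true` diagonal entries (first index with a `false` diagonal). -/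
def lv (α : Fin k → Fin k → Bool) : ℕ := Nat.find (exists_matDiag_false α)

lemma lv_le (α : Fin k → Fin k → Bool) : lv α ≤ k :=
  Nat.find_le (by simp [matDiag])

lemma matDiag_lv (α : Fin k → Fin k → Bool) : matDiag α (lv α) = false :=
  Nat.find_spec (exists_matDiag_false α)

lemma diag_of_lt_lv (α : Fin k → Fin k → Bool) {i : ℕ} (h : i < lv α) :
    matDiag α i = true := by
  have := Nat.find_min (exists_matDiag_false α) h
  simpa using this

lemma lv_eq {α : Fin k → Fin k → Bool} {n : ℕ}
    (h1 : ∀ m < n, matDiag α m = true) (h2 : matDiag α n = false) : lv α = n := by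
  refine le_antisymm (Nat.find_le h2) ?_
  exact (Nat.le_find_iff _ _).mpr fun m hm => by simp [h1 m hm]

lemma lt_lv_of_diag {α : Fin k → Fin k → Bool}
    (hI5 : ∀ i j : Fin k, i < j → α j j = true → α i i = true)
    {i : Fin k} (h : α i i = true) : (i : ℕ) < lv α := by
  by_contra hc
  push_neg at hc
  have hlk : lv α < k := lt_of_le_of_lt hc i.isLt
  set L : Fin k := ⟨lv α, hlk⟩ with hL
  have hdiag : α L L = false := by
    have := matDiag_lv α
    rwa [show lv α = ((L : Fin k) : ℕ) from rfl, matDiag_fin] at this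
  rcases eq_or_lt_of_le hc with he | hlt
  · have : L = i := Fin.ext he
    rw [this] at hdiag; rw [h] at hdiag; exact Bool.noConfusion hdiag
  · have : L < i := hlt
    have := hI5 L i this h
    rw [this] at hdiag; exact Bool.noConfusion hdiag

open Classical in
/-- least row index whose entry in column `i` is `true` (`0` if none). -/
noncomputable def rep (α : Fin k → Fin k → Bool) (i : ℕ) : ℕ :=
  if h : ∃ m, matAt α m i = true then Nat.find h else 0

lemma rep_spec {α : Fin k → Fin k → Bool} {i : ℕ} (h : ∃ m, matAt α m i = true) :
    matAt α (rep α i) i = true := by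
  classical
  rw [rep, dif_pos h]; exact Nat.find_spec h

lemma rep_min {α : Fin k → Fin k → Bool} {i m : ℕ} (hm : matAt α m i = true) :
    rep α i ≤ m := by
  classical
  rw [rep, dif_pos ⟨m, hm⟩]; exact Nat.find_min' _ hm

lemma rep_congr {α β : Fin k → Fin k → Bool} {i j : ℕ}
    (h : ∀ m, matAt α m i = matAt β m j) : rep α i = rep β j := by
  by_cases hα : ∃ m, matAt α m i = true
  · obtain ⟨m, hm⟩ := hα
    have hβ : ∃ m, matAt β m j = true := ⟨m, (h m) ▸ hm⟩
    refine le_antisymm (rep_min ?_) (rep_min ?_)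
    · rw [h]; exact rep_spec hβ
    · rw [← h]; exact rep_spec ⟨m, hm⟩
  · have hβ : ¬ ∃ m, matAt β m j = true := by
      rintro ⟨m, hm⟩; exact hα ⟨m, (h m).symm ▸ hm⟩
    classical
    rw [rep, dif_neg hα, rep, dif_neg hβ]

/-! ### Realization of a consistent pair as a concrete pebble stack -/

/-- Position of pebble `i` in the realization: the head position `hs` if `b i`,
otherwise a fresh position indexed by the representative of `i`'s class. -/
noncomputable def posn (α : Fin k → Fin k → Bool) (b : Fin k → Bool) (hs i : ℕ) : ℕ :=
  if (if h : i < k then b ⟨i, h⟩ else false) then hs else hs + 1 + rep α i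

/-- Concrete pebble stack realizing the pair `(α, b)` with head at `hs`. -/
noncomputable def rea (α : Fin k → Fin k → Bool) (b : Fin k → Bool) (hs : ℕ) : List ℕ :=
  (List.range (lv α)).map (posn α b hs)

lemma rea_length (α : Fin k → Fin k → Bool) (b : Fin k → Bool) (hs : ℕ) :
    (rea α b hs).length = lv α := by simp [rea]

lemma rea_getD {α : Fin k → Fin k → Bool} {b : Fin k → Bool} {hs i : ℕ}
    (h : i < lv α) : (rea α b hs).getD i 0 = posn α b hs i := by
  rw [rea, List.getD_eq_getElem?_getD]
  simp [h]

lemma rea_head {α : Fin k → Fin k → Bool} {b : Fin k → Bool} {hs : ℕ}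
    (hC : BasicConsistent α b) (i : Fin k) :
    (((i : ℕ) < (rea α b hs).length ∧ (rea α b hs).getD (i : ℕ) 0 = hs) ↔ b i = true) := by
  obtain ⟨hsym, htrans, hI2, hI3, hI4, hI5⟩ := hC
  rw [rea_length]
  constructor
  · rintro ⟨hi, he⟩
    rw [rea_getD hi] at he
    by_cases hb : b i = true
    · exact hb
    · exfalso
      rw [posn] at he
      simp only [i.isLt, dif_pos, Fin.eta] at he
      rw [if_neg (by simp [hb])] at he
      omega
  · intro hb
    have hd : α i i = true := hI2 i hb
    have hi : (i : ℕ) < lv α := lt_lv_of_diag hI5 hd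
    refine ⟨hi, ?_⟩
    rw [rea_getD hi, posn]
    simp [i.isLt, hb]

lemma rea_peb {α : Fin k → Fin k → Bool} {b : Fin k → Bool} {hs : ℕ}
    (hC : BasicConsistent α b) (i j : Fin k) :
    (((i : ℕ) < (rea α b hs).length ∧ (j : ℕ) < (rea α b hs).length ∧
        (rea α b hs).getD (i : ℕ) 0 = (rea α b hs).getD (j : ℕ) 0) ↔ α i j = true) := by
  obtain ⟨hsym, htrans, hI2, hI3, hI4, hI5⟩ := hC
  rw [rea_length]
  constructor
  · rintro ⟨hi, hj, he⟩
    rw [rea_getD hi, rea_getD hj, posn, posn] at he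
    simp only [i.isLt, j.isLt, dif_pos, Fin.eta] at he
    by_cases hbi : b i = true <;> by_cases hbj : b j = true
    · exact hI3 i j hbi hbj
    · exfalso; rw [if_pos hbi, if_neg (by simp [hbj])] at he; omega
    · exfalso; rw [if_neg (by simp [hbi]), if_pos hbj] at he; omega
    · rw [if_neg (by simp [hbi]), if_neg (by simp [hbj])] at he
      have hrep : rep α (i : ℕ) = rep α (j : ℕ) := by omega
      have hdi : α i i = true := by
        have := diag_of_lt_lv α hi; rwa [matDiag_fin] at this
      have hdj : α j j = true := by
        have := diag_of_lt_lv α hj; rwa [matDiag_fin] at this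
      have hei : ∃ m, matAt α m (i : ℕ) = true := ⟨i, by rw [matAt_fin]; exact hdi⟩
      have hej : ∃ m, matAt α m (j : ℕ) = true := ⟨j, by rw [matAt_fin]; exact hdj⟩
      have hmi := rep_spec hei
      have hmj := rep_spec hej
      rw [hrep] at hmi
      set m := rep α (j : ℕ) with hm
      rw [matAt] at hmi hmj
      by_cases hmk : m < k
      · rw [dif_pos ⟨hmk, i.isLt⟩] at hmi
        rw [dif_pos ⟨hmk, j.isLt⟩] at hmj
        have h1 : α i ⟨m, hmk⟩ = true := hsym _ _ (by simpa using hmi)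
        exact htrans _ _ _ h1 (by simpa using hmj)
      · rw [dif_neg (by tauto)] at hmi; exact absurd hmi (by simp)
  · intro hij
    obtain ⟨hdi, hdj, hbe⟩ := hI4 i j hij
    have hi : (i : ℕ) < lv α := lt_lv_of_diag hI5 hdi
    have hj : (j : ℕ) < lv α := lt_lv_of_diag hI5 hdj
    refine ⟨hi, hj, ?_⟩
    rw [rea_getD hi, rea_getD hj, posn, posn]
    simp only [i.isLt, j.isLt, dif_pos, Fin.eta]
    rw [hbe]
    by_cases hbj : b j = true
    · rw [if_pos hbj, if_pos hbj]
    · rw [if_neg (by simp [hbj]), if_neg (by simp [hbj])]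
      have : rep α (i : ℕ) = rep α (j : ℕ) := by
        refine rep_congr ?_
        intro m
        rw [matAt, matAt]
        by_cases hmk : m < k
        · rw [dif_pos ⟨hmk, i.isLt⟩, dif_pos ⟨hmk, j.isLt⟩]
          simp only [Fin.eta]
          set M : Fin k := ⟨m, hmk⟩
          rcases hmi : α M i with _ | _ <;> rcases hmj : α M j with _ | _
          · rfl
          · exfalso
            have : α M i = true := htrans M j i hmj (hsym i j hij)
            rw [hmi] at this; exact Bool.noConfusion this
          · exfalso
            have : α M j = true := htrans M i j hmi hij
            rw [hmj] at this; exact Bool.noConfusion this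
          · rfl
        · rw [dif_neg (by tauto), dif_neg (by tauto)]
      omega

end Helpers

section Helpers2

variable {k : ℕ}

lemma drop_apply (α : Fin k → Fin k → Bool) (b : Fin k → Bool) (n i j : Fin k) :
    opApplyAbs α b (.drop n) i j =
      if (i : ℕ) < (n : ℕ) ∧ (j : ℕ) < (n : ℕ) then α i j
      else if (i : ℕ) = (n : ℕ) ∧ (j : ℕ) = (n : ℕ) then true
      else if (i : ℕ) < (n : ℕ) ∧ (j : ℕ) = (n : ℕ) then b i
      else if (i : ℕ) = (n : ℕ) ∧ (j : ℕ) < (n : ℕ) then b j else false := by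
  show (if i < n ∧ j < n then α i j
      else if i = n ∧ j = n then true
      else if i < n ∧ j = n then b i
      else if i = n ∧ j < n then b j else false) = _
  simp only [Fin.lt_def, Fin.ext_iff]

lemma lift_apply (α : Fin k → Fin k → Bool) (b : Fin k → Bool) (n i j : Fin k) :
    opApplyAbs α b (.lift n) i j =
      if (i : ℕ) < (n : ℕ) ∧ (j : ℕ) < (n : ℕ) then α i j else false := by
  show (if i < n ∧ j < n then α i j else false) = _
  simp only [Fin.lt_def]

lemma lv_eq_of_drop {α : Fin k → Fin k → Bool} {b : Fin k → Bool}
    (hC : BasicConsistent α b) {n : Fin k}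
    (hen : opEnabledAbs α b (.drop n)) : lv α = (n : ℕ) := by
  obtain ⟨h0, hrest⟩ := hen
  refine lv_eq ?_ ?_
  · intro m hm
    have hmk : m < k := lt_trans hm n.isLt
    rcases hrest with h0' | hd
    · omega
    · have hn1k : (n : ℕ) - 1 < k := lt_of_le_of_lt (by omega) n.isLt
      rw [matDiag, dif_pos hn1k] at hd
      rw [matDiag, dif_pos hmk]
      rcases eq_or_lt_of_le (by omega : m ≤ (n : ℕ) - 1) with he | hlt
      · have : (⟨m, hmk⟩ : Fin k) = ⟨(n : ℕ) - 1, hn1k⟩ := Fin.ext he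
        rw [this]; exact hd
      · exact hC.2.2.2.2.2 ⟨m, hmk⟩ ⟨(n : ℕ) - 1, hn1k⟩ hlt hd
  · rw [matDiag, dif_pos n.isLt]
    simpa using h0

lemma lv_eq_of_lift {α : Fin k → Fin k → Bool} {b : Fin k → Bool}
    (hC : BasicConsistent α b) {n : Fin k}
    (hen : opEnabledAbs α b (.lift n)) : lv α = (n : ℕ) + 1 := by
  obtain ⟨hbn, hd⟩ := hen
  have hdn : α n n = true := hC.2.2.1 n hbn
  refine lv_eq ?_ ?_
  · intro m hm
    have hnk := n.isLt
    have hmk : m < k := by omega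
    rw [matDiag, dif_pos hmk]
    rcases eq_or_lt_of_le (by omega : m ≤ (n : ℕ)) with he | hlt
    · have : (⟨m, hmk⟩ : Fin k) = n := Fin.ext (by simpa using he)
      rw [this]; exact hdn
    · exact hC.2.2.2.2.2 ⟨m, hmk⟩ n hlt hdn
  · exact hd

lemma lv_drop_tgt {α : Fin k → Fin k → Bool} {b : Fin k → Bool}
    (hC : BasicConsistent α b) {n : Fin k}
    (hen : opEnabledAbs α b (.drop n)) :
    lv (opApplyAbs α b (.drop n)) = (n : ℕ) + 1 := by
  have hlv := lv_eq_of_drop hC hen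
  refine lv_eq ?_ ?_
  · intro m hm
    have hnk := n.isLt
    have hmk : m < k := by omega
    have e2 : ((⟨m, hmk⟩ : Fin k) : ℕ) = m := rfl
    rw [matDiag, dif_pos hmk, drop_apply]
    rcases Nat.lt_succ_iff_lt_or_eq.mp hm with h | h
    · rw [if_pos ⟨h, h⟩]
      have := diag_of_lt_lv α (i := m) (by omega)
      rwa [matDiag, dif_pos hmk] at this
    · rw [if_neg (by omega), if_pos ⟨h, h⟩]
  · rw [matDiag]
    by_cases hk : (n : ℕ) + 1 < k
    · have e2 : ((⟨(n : ℕ) + 1, hk⟩ : Fin k) : ℕ) = (n : ℕ) + 1 := rfl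
      rw [dif_pos hk, drop_apply]
      rw [if_neg (by omega), if_neg (by omega), if_neg (by omega), if_neg (by omega)]
    · rw [dif_neg hk]

lemma lv_lift_tgt {α : Fin k → Fin k → Bool} {b : Fin k → Bool}
    (hC : BasicConsistent α b) {n : Fin k}
    (hen : opEnabledAbs α b (.lift n)) :
    lv (opApplyAbs α b (.lift n)) = (n : ℕ) := by
  have hlv := lv_eq_of_lift hC hen
  refine lv_eq ?_ ?_
  · intro m hm
    have hmk : m < k := lt_trans hm n.isLt
    have e2 : ((⟨m, hmk⟩ : Fin k) : ℕ) = m := rfl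
    rw [matDiag, dif_pos hmk, lift_apply, if_pos (by omega)]
    have := diag_of_lt_lv α (i := m) (by omega)
    rwa [matDiag, dif_pos hmk] at this
  · have e2 : ((⟨(n : ℕ), n.isLt⟩ : Fin k) : ℕ) = (n : ℕ) := rfl
    rw [matDiag, dif_pos n.isLt, lift_apply, if_neg (by omega)]

/-- entries of `α` involving an index whose diagonal is `false` are `false`. -/
lemma entry_false_right {α : Fin k → Fin k → Bool} {b : Fin k → Bool}
    (hC : BasicConsistent α b) {i j : Fin k} (h : ¬ (j : ℕ) < lv α) :
    α i j = false := by
  rcases hd : α i j with _ | _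
  · rfl
  · exact absurd (lt_lv_of_diag hC.2.2.2.2.2 (hC.2.2.2.2.1 i j hd).2.1) h

lemma entry_false_left {α : Fin k → Fin k → Bool} {b : Fin k → Bool}
    (hC : BasicConsistent α b) {i j : Fin k} (h : ¬ (i : ℕ) < lv α) :
    α i j = false := by
  rcases hd : α i j with _ | _
  · rfl
  · exact absurd (lt_lv_of_diag hC.2.2.2.2.2 (hC.2.2.2.2.1 i j hd).1) h

lemma testSat_rea {α : Fin k → Fin k → Bool} {b : Fin k → Bool} {hs : ℕ} {φ : Test k}
    (hC : BasicConsistent α b) (habs : testSatAbs α b φ) :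
    testSat (rea α b hs) hs φ := by
  intro l hl
  have h2 := habs l hl
  rcases l with ⟨a, pol⟩
  cases a with
  | headPeb i =>
      simp only [atomSatAbs] at h2
      simpa [atomSat] using (rea_head hC i).trans h2
  | pebPeb i j =>
      simp only [atomSatAbs] at h2
      simpa [atomSat] using (rea_peb hC i j).trans h2

lemma getD_concat_lt (l : List ℕ) (x : ℕ) {m : ℕ} (h : m < l.length) :
    (l ++ [x]).getD m 0 = l.getD m 0 := by
  rw [List.getD_eq_getElem?_getD, List.getD_eq_getElem?_getD, List.getElem?_append,
    if_pos h]

lemma getD_concat_self (l : List ℕ) (x : ℕ) : (l ++ [x]).getD l.length 0 = x := by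
  rw [List.getD_eq_getElem?_getD, List.getElem?_append_right le_rfl]
  simp

lemma getD_dropLast (l : List ℕ) {m : ℕ} (h : m < l.length - 1) :
    l.dropLast.getD m 0 = l.getD m 0 := by
  rw [List.getD_eq_getElem?_getD, List.getD_eq_getElem?_getD]
  rw [List.getElem?_eq_getElem (by simpa using h), List.getElem?_eq_getElem (by omega)]
  simp [List.getElem_dropLast]

end Helpers2

section RealizeStep

variable {Q Sg Gm : Type} {k : ℕ}

/-- Given a transition of the consistency-pair machine executed concretely
(the concrete pebble stack `peb`, head `h`, successor stack `peb'`), the original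
transition `t` of `A` can be executed on the realization of `(α, b)`. -/
lemma realize_step (A : PT Q Sg Gm k) (t : PTrans Q Sg k) (ht : t ∈ A.δ)
    (α : Fin k → Fin k → Bool) (b : Fin k → Bool) (hOK : cpOK t α b)
    (peb peb' : List ℕ) (h : ℕ)
    (hen : opEnabled peb h t.op)
    (hpeb' : peb' = opApply peb h t.op)
    (hb : ∀ i : Fin k, b i = decide ((i : ℕ) < peb.length ∧ peb.getD (i : ℕ) 0 = h))
    (u : List Sg) (hs : ℕ) (hhs : hs ≤ u.length)
    (hlet : letterAt u hs = t.letter) :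
    A.StepT u t ⟨t.src, rea α b hs, hs⟩
      ⟨t.tgt, rea (opApplyAbs α b t.op)
          (fun i => decide ((i : ℕ) < peb'.length ∧ peb'.getD (i : ℕ) 0 = h)) hs,
        nextHead u.length hs (A.dir t.tgt)⟩ := by
  obtain ⟨hC, htst, henabs⟩ := hOK
  set c' : Fin k → Bool :=
    fun i => decide ((i : ℕ) < peb'.length ∧ peb'.getD (i : ℕ) 0 = h) with hc'
  refine ⟨ht, rfl, hhs, ?_, hlet, testSat_rea hC htst, ?_, rfl, ?_, rfl⟩
  · simpa [rea_length] using lv_le α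
  · -- opEnabled on the realization
    rcases hopc : t.op with _ | n | n <;> rw [hopc] at henabs
    · trivial
    · show (rea α b hs).length = (n : ℕ)
      rw [rea_length, lv_eq_of_drop hC henabs]
    · constructor
      · show (rea α b hs).length = (n : ℕ) + 1
        rw [rea_length, lv_eq_of_lift hC henabs]
      · have hlt : (n : ℕ) < lv α := by rw [lv_eq_of_lift hC henabs]; omega
        rw [rea_getD hlt, posn]
        simp [n.isLt, henabs.1]
  · -- the pebble stacks match
    rcases hopc : t.op with _ | n | n <;>
      rw [hopc] at henabs hen hpeb' <;> simp only [opApply] at hpeb' ⊢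
    · -- nop
      subst hpeb'
      have : c' = b := by
        funext i
        rw [hc']
        exact (hb i).symm
      rw [this]
      rfl
    · -- drop
      subst hpeb'
      have hlv := lv_eq_of_drop hC henabs
      have hlvt := lv_drop_tgt hC henabs
      have hplen : peb.length = (n : ℕ) := hen
      show rea (opApplyAbs α b (.drop n)) c' hs = rea α b hs ++ [hs]
      rw [rea, rea, hlv, hlvt, List.range_succ, List.map_append, List.map_singleton]
      congr 1
      · refine List.map_congr_left ?_
        intro m hm
        rw [List.mem_range] at hm
        have hmk : m < k := lt_trans hm n.isLt
        have hcb : c' ⟨m, hmk⟩ = b ⟨m, hmk⟩ := by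
          have h1 : c' ⟨m, hmk⟩ =
              decide (m < (peb ++ [h]).length ∧ (peb ++ [h]).getD m 0 = h) := rfl
          rw [h1, hb ⟨m, hmk⟩, decide_eq_decide]
          rw [getD_concat_lt peb h (by omega)]
          have h2 : ((⟨m, hmk⟩ : Fin k) : ℕ) = m := rfl
          rw [h2]
          simp only [List.length_append, List.length_singleton]
          constructor
          · rintro ⟨-, h3⟩; exact ⟨by omega, h3⟩
          · rintro ⟨-, h3⟩; exact ⟨by omega, h3⟩
        rw [posn, posn, dif_pos hmk, dif_pos hmk, hcb]
        rcases hbm : b ⟨m, hmk⟩ with _ | _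
        · rw [if_neg (by simp), if_neg (by simp)]
          congr 1
          refine rep_congr ?_
          intro p
          by_cases hpk : p < k
          · have e1 : ((⟨p, hpk⟩ : Fin k) : ℕ) = p := rfl
            have e2 : ((⟨m, hmk⟩ : Fin k) : ℕ) = m := rfl
            rw [matAt, matAt, dif_pos ⟨hpk, hmk⟩, dif_pos ⟨hpk, hmk⟩, drop_apply]
            rcases lt_trichotomy p (n : ℕ) with hp | hp | hp
            · rw [if_pos (by omega : _ ∧ _)]
            · rw [if_neg (by omega), if_neg (by omega), if_neg (by omega),
                if_pos (by omega : _ ∧ _)]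
              simp only [hbm]
              symm
              rcases hval : α ⟨p, hpk⟩ ⟨m, hmk⟩ with _ | _
              · rfl
              · exfalso
                have hdp := (hC.2.2.2.2.1 _ _ hval).1
                have := lt_lv_of_diag hC.2.2.2.2.2 hdp
                rw [hlv] at this; omega
            · rw [if_neg (by omega), if_neg (by omega), if_neg (by omega),
                if_neg (by omega)]
              symm
              refine entry_false_left hC ?_
              rw [hlv]; omega
          · rw [matAt, matAt, dif_neg (by tauto), dif_neg (by tauto)]
        · rw [if_pos (by simp), if_pos (by simp)]
      · -- last entry
        have hcn : c' ⟨(n : ℕ), n.isLt⟩ = true := by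
          have h1 : c' ⟨(n : ℕ), n.isLt⟩ =
              decide ((n : ℕ) < (peb ++ [h]).length ∧ (peb ++ [h]).getD (n : ℕ) 0 = h) := rfl
          rw [h1, decide_eq_true_eq]
          refine ⟨by simp [hplen], ?_⟩
          rw [← hplen]
          exact getD_concat_self peb h
        rw [posn, dif_pos n.isLt, hcn, if_pos rfl]
    · -- lift
      subst hpeb'
      obtain ⟨hplen, hptop⟩ := hen
      have hlv := lv_eq_of_lift hC henabs
      have hlvt := lv_lift_tgt hC henabs
      show rea (opApplyAbs α b (.lift n)) c' hs = (rea α b hs).dropLast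
      rw [rea, rea, hlv, hlvt, List.range_succ, List.map_append, List.map_singleton,
        List.dropLast_concat]
      refine List.map_congr_left ?_
      intro m hm
      rw [List.mem_range] at hm
      have hmk : m < k := lt_trans hm n.isLt
      have hcb : c' ⟨m, hmk⟩ = b ⟨m, hmk⟩ := by
        have h1 : c' ⟨m, hmk⟩ =
            decide (m < peb.dropLast.length ∧ peb.dropLast.getD m 0 = h) := rfl
        rw [h1, hb ⟨m, hmk⟩, decide_eq_decide]
        rw [getD_dropLast peb (by omega)]
        have h2 : ((⟨m, hmk⟩ : Fin k) : ℕ) = m := rfl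
        rw [h2]
        simp only [List.length_dropLast]
        constructor
        · rintro ⟨-, h3⟩; exact ⟨by omega, h3⟩
        · rintro ⟨-, h3⟩; exact ⟨by omega, h3⟩
      rw [posn, posn, dif_pos hmk, dif_pos hmk, hcb]
      rcases hbm : b ⟨m, hmk⟩ with _ | _
      · rw [if_neg (by simp), if_neg (by simp)]
        congr 1
        refine rep_congr ?_
        intro p
        by_cases hpk : p < k
        · have e1 : ((⟨p, hpk⟩ : Fin k) : ℕ) = p := rfl
          have e2 : ((⟨m, hmk⟩ : Fin k) : ℕ) = m := rfl
          rw [matAt, matAt, dif_pos ⟨hpk, hmk⟩, dif_pos ⟨hpk, hmk⟩, lift_apply]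
          rcases lt_trichotomy p (n : ℕ) with hp | hp | hp
          · rw [if_pos (by omega : _ ∧ _)]
          · rw [if_neg (by omega)]
            symm
            rcases hval : α ⟨p, hpk⟩ ⟨m, hmk⟩ with _ | _
            · rfl
            · exfalso
              have hbe := (hC.2.2.2.2.1 _ _ hval).2.2
              have hP : (⟨p, hpk⟩ : Fin k) = n := Fin.ext (by simpa using hp)
              rw [hP, henabs.1, hbm] at hbe
              exact Bool.noConfusion hbe
          · rw [if_neg (by omega)]
            symm
            refine entry_false_left hC ?_
            rw [hlv]; omega
        · rw [matAt, matAt, dif_neg (by tauto), dif_neg (by tauto)]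
      · rw [if_pos (by simp), if_pos (by simp)]

end RealizeStep

section FinalHelpers

variable {k : ℕ}

lemma entry_symm {α : Fin k → Fin k → Bool} {b : Fin k → Bool}
    (hC : BasicConsistent α b) (i j : Fin k) : α i j = α j i := by
  rcases h1 : α i j with _ | _ <;> rcases h2 : α j i with _ | _
  · rfl
  · exact absurd (hC.1 j i h2) (by simp [h1])
  · exact absurd (hC.1 i j h1) (by simp [h2])
  · rfl

lemma lift_col {α : Fin k → Fin k → Bool} {b : Fin k → Bool}
    (hC : BasicConsistent α b) {n : Fin k}
    (hen : opEnabledAbs α b (.lift n)) (i : Fin k) : α i n = b i := by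
  rcases hbi : b i with _ | _
  · rcases hv : α i n with _ | _
    · rfl
    · exfalso
      have := (hC.2.2.2.2.1 i n hv).2.2
      rw [hbi, hen.1] at this
      exact Bool.noConfusion this
  · exact hC.2.2.2.1 i n hbi hen.1

lemma drop_src_entry_false {α : Fin k → Fin k → Bool} {b : Fin k → Bool}
    (hC : BasicConsistent α b) {n : Fin k}
    (hen : opEnabledAbs α b (.drop n)) {i j : Fin k}
    (hij : ¬ ((i : ℕ) < (n : ℕ) ∧ (j : ℕ) < (n : ℕ))) : α i j = false := by
  have hlv := lv_eq_of_drop hC hen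
  rcases not_and_or.mp hij with h | h
  · exact entry_false_left hC (by rw [hlv]; omega)
  · exact entry_false_right hC (by rw [hlv]; omega)

lemma reconstruct_concat {l P : List ℕ} {x m : ℕ}
    (hlen : l.length = m + 1) (hget : l.getD m 0 = x) (hdl : l.dropLast = P) :
    l = P ++ [x] := by
  have hne : l ≠ [] := by
    intro h; rw [h] at hlen; simp at hlen
  have hgl : l.getLast hne = x := by
    rw [List.getLast_eq_getElem]
    rw [List.getD_eq_getElem?_getD, List.getElem?_eq_getElem (by omega)] at hget
    simpa [hlen] using hget
  conv_lhs => rw [← List.dropLast_append_getLast hne]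
  rw [hdl, hgl]

lemma letterAt_toList {Sg : Type} (a : Option Sg) :
    letterAt a.toList a.toList.length = a := by
  cases a <;> simp [letterAt, Option.toList]

end FinalHelpers

/-- If `A` is reverse-deterministic then the basic `k`-pebble transducer
obtained from `A` by the consistency-pair construction is reverse-deterministic. -/
theorem consistencyPair_revDeterministic
    {Q Sg Gm : Type} {k : ℕ} (A : PT Q Sg Gm k)
    (hA : A.RevDeterministic) :
    (consistencyPair A).RevDeterministic := by
  intro u t₁' t₂' C' hre₁ hre₂
  obtain ⟨C₁, hst₁⟩ := hre₁
  obtain ⟨C₂, hst₂⟩ := hre₂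
  obtain ⟨hδ₁, hq₁, hh₁, hpl₁, hlet₁, htest₁, hop₁, hq'₁, hpeb'₁, hhd₁⟩ := hst₁
  obtain ⟨hδ₂, hq₂, hh₂, hpl₂, hlet₂, htest₂, hop₂, hq'₂, hpeb'₂, hhd₂⟩ := hst₂
  simp only [consistencyPair, Set.mem_setOf_eq] at hδ₁ hδ₂
  obtain ⟨t₁, ht₁, α₁, b₁, hOK₁, rfl⟩ := hδ₁
  obtain ⟨t₂, ht₂, α₂, b₂, hOK₂, rfl⟩ := hδ₂
  simp only [cpTrans, consistencyPair] at hlet₁ htest₁ hop₁ hq'₁ hpeb'₁ hhd₁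
  simp only [cpTrans, consistencyPair] at hlet₂ htest₂ hop₂ hq'₂ hpeb'₂ hhd₂
  -- common target state
  have h12 : ((t₁.tgt, opApplyAbs α₁ b₁ t₁.op) : Q × (Fin k → Fin k → Bool)) =
      (t₂.tgt, opApplyAbs α₂ b₂ t₂.op) := hq'₁.symm.trans hq'₂
  have htgt : t₁.tgt = t₂.tgt := congrArg Prod.fst h12
  have hα' : opApplyAbs α₁ b₁ t₁.op = opApplyAbs α₂ b₂ t₂.op := congrArg Prod.snd h12
  -- common source head
  rw [← htgt] at hhd₂
  have hhead : C₁.h = C₂.h :=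
    nextHead_inj (A.dir t₁.tgt) hh₁ hh₂ (hhd₁.symm.trans hhd₂)
  -- common letter
  have hleteq : t₁.letter = t₂.letter := by
    rw [← hlet₁, ← hlet₂, hhead]
  -- bit vectors are concrete head tests
  have hb₁ : ∀ i : Fin k,
      b₁ i = decide ((i : ℕ) < C₁.peb.length ∧ C₁.peb.getD (i : ℕ) 0 = C₁.h) :=
    fun i => eq_decide (testSat_bitTest.mp htest₁ i)
  rw [← hhead] at hop₂ hpeb'₂ htest₂
  have hb₂ : ∀ i : Fin k,
      b₂ i = decide ((i : ℕ) < C₂.peb.length ∧ C₂.peb.getD (i : ℕ) 0 = C₁.h) :=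
    fun i => eq_decide (testSat_bitTest.mp htest₂ i)
  -- realize both transitions of A at a common configuration
  set u0 : List Sg := t₁.letter.toList with hu0
  have hlet0 : letterAt u0 u0.length = t₁.letter := letterAt_toList _
  have hst₁' := realize_step A t₁ ht₁ α₁ b₁ hOK₁ C₁.peb C'.peb C₁.h hop₁ hpeb'₁ hb₁
    u0 u0.length le_rfl hlet0
  have hst₂' := realize_step A t₂ ht₂ α₂ b₂ hOK₂ C₂.peb C'.peb C₁.h hop₂ hpeb'₂ hb₂
    u0 u0.length le_rfl (hlet0.trans hleteq)
  rw [← htgt, ← hα'] at hst₂'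
  have hteq : t₁ = t₂ := hA u0 t₁ t₂ _ ⟨_, hst₁'⟩ ⟨_, hst₂'⟩
  subst hteq
  -- now derive equality of the pairs
  obtain ⟨hC₁, htst₁, hen₁⟩ := hOK₁
  obtain ⟨hC₂, htst₂, hen₂⟩ := hOK₂
  have hpebeq : C₁.peb = C₂.peb := by
    rcases hopc : t₁.op with _ | n | n <;>
      rw [hopc] at hpeb'₁ hpeb'₂ hop₁ hop₂ <;> simp only [opApply] at hpeb'₁ hpeb'₂
    · exact hpeb'₁.symm.trans hpeb'₂
    · have h3 : C₁.peb ++ [C₁.h] = C₂.peb ++ [C₁.h] := hpeb'₁.symm.trans hpeb'₂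
      have h4 := congrArg List.dropLast h3
      simpa [List.dropLast_concat] using h4
    · obtain ⟨hl₁, hg₁⟩ := hop₁
      obtain ⟨hl₂, hg₂⟩ := hop₂
      rw [reconstruct_concat hl₁ hg₁ hpeb'₁.symm,
        reconstruct_concat hl₂ hg₂ hpeb'₂.symm]
  have hbeq : b₁ = b₂ := by
    funext i
    rw [hb₁ i, hb₂ i, hpebeq]
  have hαeq : α₁ = α₂ := by
    rcases hopc : t₁.op with _ | n | n <;> rw [hopc] at hα' hen₁ hen₂
    · simpa [opApplyAbs] using hα'
    · funext i j
      by_cases hij : (i : ℕ) < (n : ℕ) ∧ (j : ℕ) < (n : ℕ)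
      · have h1 := congrFun (congrFun hα' i) j
        rw [drop_apply, drop_apply, if_pos hij, if_pos hij] at h1
        exact h1
      · rw [drop_src_entry_false hC₁ hen₁ hij, drop_src_entry_false hC₂ hen₂ hij]
    · have hlv₁ := lv_eq_of_lift hC₁ hen₁
      have hlv₂ := lv_eq_of_lift hC₂ hen₂
      funext i j
      rcases lt_trichotomy (j : ℕ) (n : ℕ) with hj | hj | hj
      · rcases lt_trichotomy (i : ℕ) (n : ℕ) with hi | hi | hi
        · have h1 := congrFun (congrFun hα' i) j
          rw [lift_apply, lift_apply, if_pos ⟨hi, hj⟩, if_pos ⟨hi, hj⟩] at h1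
          exact h1
        · have hin : i = n := Fin.ext hi
          subst hin
          rw [entry_symm hC₁, entry_symm hC₂, lift_col hC₁ hen₁, lift_col hC₂ hen₂,
            hbeq]
        · rw [entry_false_left hC₁ (by rw [hlv₁]; omega),
            entry_false_left hC₂ (by rw [hlv₂]; omega)]
      · have hjn : j = n := Fin.ext hj
        subst hjn
        rw [lift_col hC₁ hen₁, lift_col hC₂ hen₂, hbeq]
      · rw [entry_false_right hC₁ (by rw [hlv₁]; omega),
          entry_false_right hC₂ (by rw [hlv₂]; omega)]
  rw [hαeq, hbeq]

end RevPeb
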